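/- arXiv:2601.16021 — 2 statements merged into one kernel-verified Lean document; each statement's English description precedes it below -/
import Mathlib

section
/- Let φ : I × J → ℝ be smooth with φ > 0 and φ - s·φ_s > 0. Then σ₂ := (φ - s·φ_s)·φ_s - s·φ·φ_ss vanishes identically (for s in an interval not containing 0 issues, with s ≠ 0) if and only if there exist functions c₁(r), c₂(r) such that φ(r,s)² = c₁(r)·s² + c₂(r). -/
open Set

private lemma const_of_hasDerivAt_zero {f : ℝ → ℝ} {a b : ℝ}
    (hf : ∀ s ∈ Set.Ioo a b, HasDerivAt f 0 s)
    {x y : ℝ} (hx : x ∈ Set.Ioo a b) (hy : y ∈ Set.Ioo a b) : f x = f y := by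
  refine (convex_Ioo a b).is_const_of_fderivWithin_eq_zero
    (fun s hs => (hf s hs).differentiableAt.differentiableWithinAt) (fun s hs => ?_) hx hy
  rw [fderivWithin_eq_fderiv (isOpen_Ioo.uniqueDiffOn s hs) (hf s hs).differentiableAt,
    (hf s hs).hasFDerivAt.fderiv]
  ext t; simp

/-- σ₂ vanishes identically on an interval of s not containing 0 iff
φ² is quadratic in s: φ(r,s)² = c₁(r)s² + c₂(r), i.e. F is Riemannian. -/
theorem sigma2_eq_zero_iff_riemannian (φ : ℝ → ℝ → ℝ)
    (hφ : ∀ r, ContDiff ℝ (⊤ : ℕ∞) (φ r)) (a b : ℝ) (hab : a < b)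
    (h0 : (0 : ℝ) ∉ Set.Ioo a b)
    (hpos : ∀ r, ∀ s ∈ Set.Ioo a b, 0 < φ r s)
    (hreg : ∀ r, ∀ s ∈ Set.Ioo a b, 0 < φ r s - s * deriv (φ r) s) :
    (∀ r, ∀ s ∈ Set.Ioo a b,
        (φ r s - s * deriv (φ r) s) * deriv (φ r) s -
          s * φ r s * deriv (deriv (φ r)) s = 0) ↔
      ∃ c₁ c₂ : ℝ → ℝ, ∀ r, ∀ s ∈ Set.Ioo a b,
        (φ r s) ^ 2 = c₁ r * s ^ 2 + c₂ r := by
  have hne : ∀ s ∈ Set.Ioo a b, s ≠ 0 := fun s hs h => h0 (h ▸ hs)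
  have hm : (a + b) / 2 ∈ Set.Ioo a b := ⟨by linarith, by linarith⟩
  set m := (a + b) / 2
  -- basic differentiability facts
  have hd1 : ∀ r, Differentiable ℝ (φ r) := fun r => (hφ r).differentiable (by simp)
  have hd2 : ∀ r, Differentiable ℝ (deriv (φ r)) := fun r =>
    ((contDiff_infty_iff_deriv.mp ((hφ r).of_le le_rfl)).2).differentiable (by simp)
  have hdg : ∀ r s, HasDerivAt (fun t => φ r t * deriv (φ r) t)
      (deriv (φ r) s * deriv (φ r) s + φ r s * deriv (deriv (φ r)) s) s := fun r s =>
    ((hd1 r s).hasDerivAt.mul (hd2 r s).hasDerivAt)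
  constructor
  · intro hσ
    refine ⟨fun r => φ r m * deriv (φ r) m / m,
            fun r => (φ r m) ^ 2 - (φ r m * deriv (φ r) m / m) * m ^ 2, fun r s hs => ?_⟩
    set C := φ r m * deriv (φ r) m / m with hC
    -- g s = s * g' s
    have key : ∀ t ∈ Set.Ioo a b, φ r t * deriv (φ r) t =
        t * (deriv (φ r) t * deriv (φ r) t + φ r t * deriv (deriv (φ r)) t) := by
      intro t ht
      have h := hσ r t ht
      linear_combination h
    -- k = g/s is constant
    have hk : ∀ t ∈ Set.Ioo a b,
        HasDerivAt (fun u => φ r u * deriv (φ r) u / u) 0 t := by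
      intro t ht
      have h1 := (hdg r t).fun_div (hasDerivAt_id t) (hne t ht)
      refine h1.congr_deriv ?_
      simp only [id_eq]
      rw [key t ht]
      ring
    have hgC : ∀ t ∈ Set.Ioo a b, φ r t * deriv (φ r) t = C * t := by
      intro t ht
      have h := const_of_hasDerivAt_zero hk ht hm
      rw [hC, ← h]
      exact (div_mul_cancel₀ _ (hne t ht)).symm
    -- F = φ² - C s² is constant
    have hF : ∀ t ∈ Set.Ioo a b,
        HasDerivAt (fun u => φ r u ^ 2 - C * u ^ 2) 0 t := by
      intro t ht
      have h1 : HasDerivAt (fun u => φ r u ^ 2 - C * u ^ 2)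
          (2 * φ r t * deriv (φ r) t - C * (2 * t)) t := by
        have h2 := ((hd1 r t).hasDerivAt.fun_pow 2).fun_sub
          ((hasDerivAt_pow 2 t).const_mul C)
        refine h2.congr_deriv ?_
        ring
      convert h1 using 1
      have := hgC t ht
      linarith
    have h := const_of_hasDerivAt_zero hF hs hm
    show φ r s ^ 2 = C * s ^ 2 + (φ r m ^ 2 - C * m ^ 2)
    linarith [h]
  · rintro ⟨c₁, c₂, hc⟩ r s hs
    -- differentiate φ² = c₁ s² + c₂ twice on the open interval
    have heq1 : ∀ t ∈ Set.Ioo a b, φ r t * deriv (φ r) t = c₁ r * t := by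
      intro t ht
      have hev : (fun u => φ r u ^ 2) =ᶠ[nhds t] fun u => c₁ r * u ^ 2 + c₂ r :=
        Filter.eventuallyEq_of_mem (isOpen_Ioo.mem_nhds ht) (fun u hu => hc r u hu)
      have h1 : deriv (fun u => φ r u ^ 2) t = deriv (fun u => c₁ r * u ^ 2 + c₂ r) t :=
        hev.deriv_eq
      have h2 : deriv (fun u => φ r u ^ 2) t = 2 * φ r t * deriv (φ r) t := by
        rw [((hd1 r t).hasDerivAt.fun_pow 2).deriv]; ring
      have h3 : deriv (fun u => c₁ r * u ^ 2 + c₂ r) t = c₁ r * (2 * t) := by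
        rw [(((hasDerivAt_pow 2 t).const_mul (c₁ r)).add_const (c₂ r)).deriv]; ring
      rw [h2, h3] at h1; linarith
    have heq2 : deriv (φ r) s * deriv (φ r) s + φ r s * deriv (deriv (φ r)) s = c₁ r := by
      have hev : (fun u => φ r u * deriv (φ r) u) =ᶠ[nhds s] fun u => c₁ r * u :=
        Filter.eventuallyEq_of_mem (isOpen_Ioo.mem_nhds hs) (fun u hu => heq1 u hu)
      have h1 := hev.deriv_eq
      rw [(hdg r s).deriv] at h1
      have h3 : deriv (fun u => c₁ r * u) s = c₁ r := by
        simpa using ((hasDerivAt_id s).const_mul (c₁ r)).deriv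
      rw [h3] at h1; exact h1
    have h1 := heq1 s hs
    linear_combination h1 - s * heq2
end

section
/- Fix r > 0 and constants a > 0, c with c·r² ≠ 0. Define φ(s) = a · s^((c·r² - 1)/(c·r²)) · (r² - s²)^(1/(2·c·r²)) for 0 < s < r. Then φ satisfies φ_s/(φ - s·φ_s) = (c(r² - s²) - 1)/s; equivalently, W := φ_s/(φ - sφ_s) solves the T-condition ODE W' + (1/s + 2s/(r² - s²))W = -2/(r² - s²). -/
open Real

/-- The explicit T-condition family
φ(s) = a · s^((cr²-1)/(cr²)) · (r² - s²)^(1/(2cr²)) satisfies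
φ_s/(φ - sφ_s) = (c(r² - s²) - 1)/s on (0, r). -/
theorem phi_satisfies_W_equation (r a c : ℝ) (hr : 0 < r) (ha : 0 < a)
    (hc : c * r ^ 2 ≠ 0)
    (φ : ℝ → ℝ)
    (hφ : ∀ s, φ s = a * s ^ ((c * r ^ 2 - 1) / (c * r ^ 2)) *
        (r ^ 2 - s ^ 2) ^ (1 / (2 * c * r ^ 2)))
    (hne : ∀ s ∈ Set.Ioo 0 r, φ s - s * deriv φ s ≠ 0) :
    ∀ s ∈ Set.Ioo 0 r,
      deriv φ s / (φ s - s * deriv φ s) = (c * (r ^ 2 - s ^ 2) - 1) / s := by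
  intro s hs
  obtain ⟨hs0, hsr⟩ := hs
  have hrs : 0 < r ^ 2 - s ^ 2 := by nlinarith
  set p := (c * r ^ 2 - 1) / (c * r ^ 2) with hp
  set q := 1 / (2 * c * r ^ 2) with hq
  have h1 : HasDerivAt (fun s : ℝ => a * s ^ p) (a * (p * s ^ (p - 1))) s :=
    (Real.hasDerivAt_rpow_const (Or.inl hs0.ne')).const_mul a
  have hbase : HasDerivAt (fun s : ℝ => r ^ 2 - s ^ 2) (0 - 2 * s) s := by
    simpa using ((hasDerivAt_pow 2 s).const_sub (r ^ 2))
  have h2 : HasDerivAt (fun s : ℝ => (r ^ 2 - s ^ 2) ^ q)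
      ((0 - 2 * s) * q * (r ^ 2 - s ^ 2) ^ (q - 1)) s :=
    hbase.rpow_const (Or.inl hrs.ne')
  have hfun : φ = fun s : ℝ => a * s ^ p * (r ^ 2 - s ^ 2) ^ q := funext hφ
  have hD : HasDerivAt φ
      (a * (p * s ^ (p - 1)) * (r ^ 2 - s ^ 2) ^ q +
        (a * s ^ p) * ((0 - 2 * s) * q * (r ^ 2 - s ^ 2) ^ (q - 1))) s := by
    rw [hfun]; exact h1.mul h2
  have hD' := hD.deriv
  have hsp : s ^ (p - 1) = s ^ p / s := by
    rw [Real.rpow_sub hs0, Real.rpow_one]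
  have hrq : (r ^ 2 - s ^ 2) ^ (q - 1) = (r ^ 2 - s ^ 2) ^ q / (r ^ 2 - s ^ 2) := by
    rw [Real.rpow_sub hrs, Real.rpow_one]
  rw [div_eq_div_iff (hne s ⟨hs0, hsr⟩) hs0.ne']
  rw [hD', hφ s, hsp, hrq, hp, hq]
  have h2c : (2 : ℝ) * c * r ^ 2 ≠ 0 := by
    intro h; apply hc; linarith [h]
  have hc0 : c ≠ 0 := left_ne_zero_of_mul hc
  field_simp
  ring
end
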